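/- Let G be a group generated by a finite subset X, and let N ⊆ G be a subset such that (i) N is exponentially negligible in G with respect to X, and (ii) there exist constants ρ > 1 and n₀ ≥ 0 such that |C_G(g) ∩ B_{G,X}(n)| ≤ ρ^{-n}·|B_{G,X}(n)| for all g ∈ G ∖ N and all n ≥ n₀. Then the set {(x,y) ∈ G² : xy = yx} is exponentially negligible in G with respect to X. -/

import Mathlib

open scoped Classical

noncomputable section

namespace RelHypPaper


variable {G : Type*} [Group G]

/-- The word length of `g ∈ G` with respect to a generating set `S ⊆ G`:
the least length of a word over `S ∪ S⁻¹` representing `g`. -/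
def wordLength (S : Set G) (g : G) : ℕ :=
  sInf {n | ∃ l : List G, l.length = n ∧ (∀ x ∈ l, x ∈ S ∪ S⁻¹) ∧ l.prod = g}

/-- The ball of radius `n` in the Cayley graph `Γ(G,S)`. -/
def ball (S : Set G) (n : ℕ) : Set G := {g | wordLength S g ≤ n}

/-- The sphere of radius `n` in the Cayley graph `Γ(G,S)`. -/
def sphere (S : Set G) (n : ℕ) : Set G := {g | wordLength S g = n}

/-- A subset `S ⊆ G` is exponentially negligible with respect to `X` if
`|S ∩ B(n)| / |B(n)| ≤ ρ⁻ⁿ` for some `ρ > 1` and all sufficiently large `n`. -/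
def ExpNegligible (S : Set G) (X : Set G) : Prop :=
  ∃ ρ : ℝ, 1 < ρ ∧ ∀ᶠ n : ℕ in Filter.atTop,
    ((S ∩ ball X n).ncard : ℝ) / ((ball X n).ncard : ℝ) ≤ ρ ^ (-(n : ℤ))

/-- A subset `S ⊆ G²` is exponentially negligible with respect to `X` if
`|S ∩ B(n)²| / |B(n)|² ≤ ρ⁻ⁿ` for some `ρ > 1` and all sufficiently large `n`. -/
def ExpNegligible2 (S : Set (G × G)) (X : Set G) : Prop :=
  ∃ ρ : ℝ, 1 < ρ ∧ ∀ᶠ n : ℕ in Filter.atTop,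
    ((S ∩ (ball X n) ×ˢ (ball X n)).ncard : ℝ) / ((ball X n).ncard : ℝ) ^ 2
      ≤ ρ ^ (-(n : ℤ))

/-- A group is virtually cyclic if it has a cyclic subgroup of finite index. -/
def VirtuallyCyclic (G : Type*) [Group G] : Prop :=
  ∃ C : Subgroup G, IsCyclic C ∧ C.FiniteIndex

variable {Ω : Type*}

/-- The free product `F = (∗_{ω∈Ω} H_ω) ∗ F(X)`. -/
abbrev RelFree (H : Ω → Subgroup G) (X : Set G) : Type _ :=
  Monoid.Coprod (Monoid.CoprodI fun ω => H ω) (FreeGroup X)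

/-- The canonical homomorphism `φ : (∗_{ω∈Ω} H_ω) ∗ F(X) → G`. -/
def relMap (H : Ω → Subgroup G) (X : Set G) : RelFree H X →* G :=
  Monoid.Coprod.lift (Monoid.CoprodI.lift fun ω => (H ω).subtype)
    (FreeGroup.lift fun x => (x : G))

/-- The natural generating set of `F = (∗_{ω∈Ω} H_ω) ∗ F(X)`: the letters of `X`
together with the elements of the `H_ω`. -/
def relGens (H : Ω → Subgroup G) (X : Set G) : Set (RelFree H X) :=
  (Set.range fun x : X => Monoid.Coprod.inr (FreeGroup.of x)) ∪
    ⋃ ω, Set.range fun h : H ω => Monoid.Coprod.inl (Monoid.CoprodI.of h)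

/-- The relative area of `w ∈ F`: the least `n` such that `w` is a product of `n`
conjugates of elements of `R ∪ R⁻¹`. -/
def relArea {F : Type*} [Group F] (R : Set F) (w : F) : ℕ :=
  sInf {n | ∃ l : List F, l.length = n ∧
    (∀ x ∈ l, ∃ f r, r ∈ R ∪ R⁻¹ ∧ x = f⁻¹ * r * f) ∧ l.prod = w}

/-- Osin's definition: `G` is hyperbolic relative to the collection `{H_ω}_{ω∈Ω}`
if it is finitely presented relative to `{H_ω}` (witnessed by some finite `X ⊆ G`
and a finite set `R` of relators) and satisfies a relative linear isoperimetric
inequality. -/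
def IsRelativelyHyperbolic (H : Ω → Subgroup G) : Prop :=
  ∃ X : Set G, X.Finite ∧ Function.Surjective (relMap H X) ∧
    ∃ R : Set (RelFree H X), R.Finite ∧
      (relMap H X).ker = Subgroup.normalClosure R ∧
      ∃ C : ℝ, 0 ≤ C ∧ ∀ w ∈ (relMap H X).ker,
        (relArea R w : ℝ) ≤ C * (wordLength (relGens H X) w)

/-- The set of parabolic elements: elements conjugate into some `H_ω`. -/
def parabolics (H : Ω → Subgroup G) : Set G :=
  {x | ∃ ω, ∃ g : G, ∃ h ∈ H ω, x = g * h * g⁻¹}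

/-- The set `H = ⋃_{ω∈Ω} (H_ω ∖ {1})`. -/
def hSet (H : Ω → Subgroup G) : Set G := (⋃ ω, (H ω : Set G)) \ {1}

/-!
Counting commuting pairs fibrewise over the first coordinate gives
`|{(x, y) ∈ B² | xy = yx}| = ∑_{x ∈ B} |C_G(x) ∩ B|` for a finite ball `B`. The terms with
`x ∈ N` contribute at most `|N ∩ B| · |B|` and the others at most `ρ₂⁻ⁿ |B|²` in total, so the
density of commuting pairs is at most `ρ₁⁻ⁿ + ρ₂⁻ⁿ`, which is eventually below `σ⁻ⁿ` for any
`1 < σ < min ρ₁ ρ₂`.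
-/

lemma ncard_commuting_inter_prod_eq_sum (B : Finset G) :
    ({p : G × G | p.1 * p.2 = p.2 * p.1} ∩ (B : Set G) ×ˢ (B : Set G)).ncard =
      ∑ x ∈ B, ((Subgroup.centralizer {x} : Set G) ∩ B).ncard := by
  have hpairs : {p : G × G | p.1 * p.2 = p.2 * p.1} ∩ (B : Set G) ×ˢ (B : Set G) =
      ↑((B ×ˢ B).filter fun p => p.1 * p.2 = p.2 * p.1) := by
    ext p; simp [and_comm]
  have hfibre (x : G) : (Subgroup.centralizer {x} : Set G) ∩ B =
      ↑(B.filter fun y => x * y = y * x) := by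
    ext y; simp [Subgroup.mem_centralizer_singleton_iff, eq_comm, and_comm]
  simp only [hpairs, hfibre, Set.ncard_coe_finset, Finset.card_filter, Finset.sum_product]

lemma commuting_pairs_density_le (B : Set G) (N : Set G) {r : ℝ} (hr : 0 ≤ r)
    (hcent : ∀ g ∉ N, (((Subgroup.centralizer {g} : Set G) ∩ B).ncard : ℝ) ≤ r * B.ncard) :
    (({p : G × G | p.1 * p.2 = p.2 * p.1} ∩ B ×ˢ B).ncard : ℝ) / (B.ncard : ℝ) ^ 2 ≤
      ((N ∩ B).ncard : ℝ) / B.ncard + r := by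
  rcases B.finite_or_infinite with hB | hB
  swap
  · -- `ncard` of an infinite set is `0`, and so is division by `0`.
    simp [hB.ncard, hr]
  obtain ⟨B, rfl⟩ := hB.exists_finset_coe
  simp only [Set.ncard_coe_finset] at hcent ⊢
  rcases (Nat.cast_nonneg (α := ℝ) B.card).eq_or_lt with hB₀ | hB₀
  · simp [← hB₀, hr]
  have hterm (x : G) (_ : x ∈ B) :
      (((Subgroup.centralizer {x} : Set G) ∩ B).ncard : ℝ) ≤
        (if x ∈ N then 1 else 0) * B.card + r * B.card := by
    split_ifs with hxN
    · have : (((Subgroup.centralizer {x} : Set G) ∩ B).ncard : ℝ) ≤ B.card := by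
        exact_mod_cast (Set.ncard_inter_le_ncard_right _ (B : Set G)).trans_eq
          (Set.ncard_coe_finset B)
      have : 0 ≤ r * B.card := by positivity
      linarith
    · simpa using hcent x hxN
  have hN : ((N ∩ B).ncard : ℝ) = ∑ x ∈ B, if x ∈ N then 1 else 0 := by
    rw [Finset.sum_boole, ← Set.ncard_coe_finset, Finset.coe_filter]
    congr 2; ext; simp [and_comm]
  rw [ncard_commuting_inter_prod_eq_sum, div_le_iff₀ (by positivity)]
  push_cast
  calc _ ≤ ∑ x ∈ B, ((if x ∈ N then 1 else 0) * B.card + r * B.card : ℝ) :=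
        Finset.sum_le_sum hterm
    _ = _ := by
        rw [Finset.sum_add_distrib, ← Finset.sum_mul, ← hN, Finset.sum_const, nsmul_eq_mul]
        field_simp

lemma eventually_const_mul_zpow_neg_le (c : ℝ) {σ ρ : ℝ} (hσ : 0 < σ) (hσρ : σ < ρ) :
    ∀ᶠ n : ℕ in Filter.atTop, c * ρ ^ (-(n : ℤ)) ≤ σ ^ (-(n : ℤ)) := by
  have hlim : Filter.Tendsto (fun n : ℕ => c * (σ / ρ) ^ n) Filter.atTop (nhds 0) := by
    simpa using (tendsto_pow_atTop_nhds_zero_of_lt_one (div_nonneg hσ.le (hσ.trans hσρ).le)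
      ((div_lt_one (hσ.trans hσρ)).2 hσρ)).const_mul c
  filter_upwards [hlim.eventually_le_const zero_lt_one] with n hn
  calc c * ρ ^ (-(n : ℤ)) = c * (σ / ρ) ^ n * σ ^ (-(n : ℤ)) := by
        rw [div_pow, zpow_neg, zpow_neg, zpow_natCast, zpow_natCast]
        field_simp
    _ ≤ σ ^ (-(n : ℤ)) := mul_le_of_le_one_left (by positivity) hn

theorem commuting_pairs_expNegligible_of_centralizer_bound_general {G : Type*} [Group G]
    (X : Set G)
    (N : Set G)
    (hneg : ExpNegligible N X)
    (hcent : ∃ ρ : ℝ, 1 < ρ ∧ ∃ n₀ : ℕ, ∀ g : G, g ∉ N → ∀ n : ℕ, n₀ ≤ n →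
      (((Subgroup.centralizer {g} : Set G) ∩ ball X n).ncard : ℝ) ≤
        ρ ^ (-(n : ℤ)) * ((ball X n).ncard : ℝ)) :
    ExpNegligible2 {p : G × G | p.1 * p.2 = p.2 * p.1} X := by
  obtain ⟨ρ₁, hρ₁, hN⟩ := hneg
  obtain ⟨ρ₂, hρ₂, n₀, hC⟩ := hcent
  obtain ⟨σ, hσ, hσρ⟩ := exists_between (lt_min hρ₁ hρ₂)
  have hσ₀ : 0 < σ := zero_lt_one.trans hσ
  refine ⟨σ, hσ, ?_⟩
  filter_upwards [hN, Filter.eventually_ge_atTop n₀,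
    eventually_const_mul_zpow_neg_le 2 hσ₀ (hσρ.trans_le (min_le_left _ _)),
    eventually_const_mul_zpow_neg_le 2 hσ₀ (hσρ.trans_le (min_le_right _ _))] with n hNn hn h₁ h₂
  calc _ ≤ ((N ∩ ball X n).ncard : ℝ) / (ball X n).ncard + ρ₂ ^ (-(n : ℤ)) :=
        commuting_pairs_density_le _ _ (by positivity) fun g hg => hC g hg n hn
    _ ≤ ρ₁ ^ (-(n : ℤ)) + ρ₂ ^ (-(n : ℤ)) := by gcongr
    _ ≤ σ ^ (-(n : ℤ)) := by linarith

/-- (Lemma `l:amv`.) Let `G` be generated by a finite set `X` and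
let `N ⊆ G` be (i) exponentially negligible, and such that (ii) there are `ρ > 1`
and `n₀` with `|C_G(g) ∩ B(n)| ≤ ρ⁻ⁿ·|B(n)|` for all `g ∉ N` and `n ≥ n₀`. Then the
set of commuting pairs is exponentially negligible in `G` with respect to `X`. -/
theorem commuting_pairs_expNegligible_of_centralizer_bound {G : Type*} [Group G]
    (X : Set G) (hXfin : X.Finite) (hXgen : Subgroup.closure X = ⊤)
    (N : Set G)
    (hneg : ExpNegligible N X)
    (hcent : ∃ ρ : ℝ, 1 < ρ ∧ ∃ n₀ : ℕ, ∀ g : G, g ∉ N → ∀ n : ℕ, n₀ ≤ n →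
      (((Subgroup.centralizer {g} : Set G) ∩ ball X n).ncard : ℝ) ≤
        ρ ^ (-(n : ℤ)) * ((ball X n).ncard : ℝ)) :
    ExpNegligible2 {p : G × G | p.1 * p.2 = p.2 * p.1} X :=
  commuting_pairs_expNegligible_of_centralizer_bound_general X N hneg hcent

end RelHypPaper
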